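/- Let G be a countable discrete abelian group with dual Ĝ and Haar measure λ, let F ⊆ Ĝ be measurable, H = L²(F, λ|_F), and π the representation of G on H by multiplication by characters. If x and y are both frame vectors for π, then the frames {π(g)x} and {π(g)y} are similar: there exists a bounded invertible operator S : H → H commuting with all π(g) such that S(π(g)x) = π(g)y for all g ∈ G. Consequently the ranges of the analysis operators Θ_x and Θ_y in ℓ²(G) coincide. -/

import Mathlib

/-!
Because the characters form an orthonormal basis of `L²(μ)`, Parseval's identity applied to
`h · conj x` shows that the frame sum `∑_g |⟨h, π(g)x⟩|²` equals `∫ |h|² |x|²`. Testing the frame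
inequalities on indicators of measurable subsets of `F` therefore forces `A ≤ |x|² ≤ B` almost
everywhere on `F`. Hence multiplication by `y / x` is a bounded operator on `L²(F)` with bounded
inverse `x / y`; it commutes with the multiplication operators `π(g)` and sends `x` to `y`. The
analysis coefficients transform by `Θ_y h = Θ_x (h · conj (y / x))`, so the ranges agree.
-/

open MeasureTheory ComplexConjugate

section Parseval

variable {X : Type*} [MeasurableSpace X] {μ : Measure X}

lemma MeasureTheory.MemLp.norm_toLp_two_sq {f : X → ℂ} (hf : MemLp f 2 μ) :
    ‖hf.toLp f‖ ^ 2 = ∫ t, ‖f t‖ ^ 2 ∂μ := by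
  have h : inner ℂ (hf.toLp f) (hf.toLp f) = ∫ t, ((‖f t‖ ^ 2 : ℝ) : ℂ) ∂μ := by
    rw [L2.inner_def]
    refine integral_congr_ae ?_
    filter_upwards [hf.coeFn_toLp] with t ht
    rw [ht, inner_self_eq_norm_sq_to_K]
    push_cast
    rfl
  rw [inner_self_eq_norm_sq_to_K, integral_complex_ofReal] at h
  exact RCLike.ofReal_injective (K := ℂ) (by rw [RCLike.ofReal_pow]; exact h)

lemma MeasureTheory.MemLp.inner_toLp_two {φ : X → ℂ} (hφ : MemLp φ 2 μ) (f : Lp ℂ 2 μ) :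
    inner ℂ (hφ.toLp φ) f = ∫ t, f t * conj (φ t) ∂μ := by
  rw [L2.inner_def]
  refine integral_congr_ae ?_
  filter_upwards [hφ.coeFn_toLp] with t ht
  rw [ht, RCLike.inner_apply, mul_comm]

def HasParseval {G : Type*} (μ : Measure X) (χ : G → X → ℂ) : Prop :=
  ∀ f : X → ℂ, MemLp f 2 μ →
    HasSum (fun g => ‖∫ t, f t * conj (χ g t) ∂μ‖ ^ 2) (∫ t, ‖f t‖ ^ 2 ∂μ)

theorem hasParseval_of_orthonormal_of_complete {G : Type*} [DecidableEq G] {χ : G → X → ℂ}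
    (hχ : ∀ g, MemLp (χ g) 2 μ)
    (horth : ∀ g g' : G, ∫ t, χ g t * conj (χ g' t) ∂μ = if g = g' then 1 else 0)
    (hcomp : ∀ f : X → ℂ, MemLp f 2 μ → (∀ g, ∫ t, f t * conj (χ g t) ∂μ = 0) → f =ᵐ[μ] 0) :
    HasParseval μ χ := by
  intro f hf
  set e : G → Lp ℂ 2 μ := fun g => (hχ g).toLp (χ g)
  have hinner : ∀ g (F : Lp ℂ 2 μ), inner ℂ (e g) F = ∫ t, F t * conj (χ g t) ∂μ :=
    fun g => (hχ g).inner_toLp_two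
  have hon : Orthonormal ℂ e := by
    refine orthonormal_iff_ite.2 fun g g' => ?_
    calc inner ℂ (e g) (e g') = ∫ t, χ g' t * conj (χ g t) ∂μ :=
          (hinner g _).trans <| integral_congr_ae <| by
            filter_upwards [(hχ g').coeFn_toLp] with t ht
            rw [ht]
      _ = if g = g' then 1 else 0 := by rw [horth]; exact if_congr eq_comm rfl rfl
  have hbot : (Submodule.span ℂ (Set.range e))ᗮ = ⊥ := by
    refine (Submodule.eq_bot_iff _).2 fun F hF => Lp.eq_zero_iff_ae_eq_zero.2 <|
      hcomp F (Lp.memLp F) fun g => ?_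
    rw [← hinner]
    exact (Submodule.mem_orthogonal _ _).1 hF _ (Submodule.subset_span ⟨g, rfl⟩)
  have := lp.hasSum_norm (p := 2) (by norm_num)
    ((HilbertBasis.mkOfOrthogonalEqBot hon hbot).repr (hf.toLp f))
  simp only [HilbertBasis.repr_apply_apply, HilbertBasis.coe_mkOfOrthogonalEqBot, hinner,
    LinearIsometryEquiv.norm_map] at this
  have hcoeff : ∀ g, ∫ t, hf.toLp f t * conj (χ g t) ∂μ = ∫ t, f t * conj (χ g t) ∂μ := fun g =>
    integral_congr_ae <| by filter_upwards [hf.coeFn_toLp] with t ht; rw [ht]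
  simpa only [hcoeff, ENNReal.toReal_ofNat, Real.rpow_two, hf.norm_toLp_two_sq] using this

end Parseval

section FrameBounds

variable {X : Type*} [MeasurableSpace X] {μ : Measure X} {F : Set X}

lemma ae_mem_imp_le_of_forall_setIntegral_le (hF : MeasurableSet F) {f g : X → ℝ}
    (hf : Integrable f μ) (hg : Integrable g μ)
    (hfg : ∀ E, MeasurableSet E → E ⊆ F → ∫ t in E, f t ∂μ ≤ ∫ t in E, g t ∂μ) :
    ∀ᵐ t ∂μ, t ∈ F → f t ≤ g t := by
  rw [← ae_restrict_iff' hF]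
  refine ae_le_of_forall_setIntegral_le hf.integrableOn hg.integrableOn fun s hs _ => ?_
  rw [Measure.restrict_restrict hs]
  exact hfg _ (hs.inter hF) Set.inter_subset_right

variable {G : Type*} {χ : G → X → ℂ} {x : X → ℂ}

lemma HasParseval.hasSum_norm_integral_mul_conj_mul_sq (hP : HasParseval μ χ) {h : X → ℂ}
    (hhx : MemLp (fun t => h t * conj (x t)) 2 μ) :
    HasSum (fun g => ‖∫ t, h t * conj (χ g t * x t) ∂μ‖ ^ 2) (∫ t, ‖h t‖ ^ 2 * ‖x t‖ ^ 2 ∂μ) := by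
  have hcoeff : ∀ g, ∫ t, h t * conj (χ g t * x t) ∂μ = ∫ t, h t * conj (x t) * conj (χ g t) ∂μ :=
    fun g => integral_congr_ae (ae_of_all _ fun t => by simp only [map_mul]; ring)
  simpa only [hcoeff, norm_mul, RCLike.norm_conj, mul_pow] using hP _ hhx

theorem HasParseval.ae_bounds_of_frame [IsFiniteMeasure μ] (hP : HasParseval μ χ)
    (hF : MeasurableSet F) (hx : MemLp x 2 μ) {C₁ C₂ : ℝ}
    (hframe : ∀ h : X → ℂ, MemLp h 2 μ → (∀ᵐ t ∂μ, t ∉ F → h t = 0) →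
      C₁ * ∫ t, ‖h t‖ ^ 2 ∂μ ≤ ∑' g : G, ‖∫ t, h t * conj (χ g t * x t) ∂μ‖ ^ 2 ∧
      ∑' g : G, ‖∫ t, h t * conj (χ g t * x t) ∂μ‖ ^ 2 ≤ C₂ * ∫ t, ‖h t‖ ^ 2 ∂μ) :
    (∀ᵐ t ∂μ, t ∈ F → C₁ ≤ ‖x t‖ ^ 2) ∧ ∀ᵐ t ∂μ, t ∈ F → ‖x t‖ ^ 2 ≤ C₂ := by
  have hx2 : Integrable (fun t => ‖x t‖ ^ 2) μ := (memLp_two_iff_integrable_sq_norm hx.1).1 hx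
  have hsets : ∀ E, MeasurableSet E → E ⊆ F →
      C₁ * μ.real E ≤ ∫ t in E, ‖x t‖ ^ 2 ∂μ ∧ ∫ t in E, ‖x t‖ ^ 2 ∂μ ≤ C₂ * μ.real E := by
    intro E hE hEF
    have hmemE : MemLp (E.indicator (1 : X → ℂ)) 2 μ :=
      memLp_indicator_const 2 hE 1 (Or.inr (measure_ne_top μ E))
    have hsq : ∀ t, ‖E.indicator (1 : X → ℂ) t‖ ^ 2 = E.indicator 1 t := fun t => by
      by_cases ht : t ∈ E <;> simp [ht]
    have hnorm : ∫ t, ‖E.indicator (1 : X → ℂ) t‖ ^ 2 ∂μ = μ.real E := by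
      simp only [hsq, integral_indicator_one hE]
    have hsum : ∑' g, ‖∫ t, E.indicator 1 t * conj (χ g t * x t) ∂μ‖ ^ 2 =
        ∫ t in E, ‖x t‖ ^ 2 ∂μ := by
      refine (hP.hasSum_norm_integral_mul_conj_mul_sq ?_).tsum_eq.trans ?_
      · refine hx.star.of_le (hmemE.1.mul hx.star.1) (ae_of_all _ fun t => ?_)
        by_cases ht : t ∈ E <;> simp [ht]
      · rw [← integral_indicator hE]
        congr 1 with t
        by_cases ht : t ∈ E <;> simp [ht]
    rw [← hnorm, ← hsum]
    refine hframe _ hmemE ?_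
    exact ae_of_all _ fun t ht => Set.indicator_of_notMem (fun htE => ht (hEF htE)) _
  exact ⟨ae_mem_imp_le_of_forall_setIntegral_le hF (integrable_const C₁) hx2
      fun E hE hEF => by simpa [setIntegral_const, mul_comm] using (hsets E hE hEF).1,
    ae_mem_imp_le_of_forall_setIntegral_le hF hx2 (integrable_const C₂)
      fun E hE hEF => by simpa [setIntegral_const, mul_comm] using (hsets E hE hEF).2⟩

end FrameBounds

section Multiplier

variable {X : Type*} [MeasurableSpace X] {μ : Measure X} {m h : X → ℂ} {K : ℝ}

lemma ae_norm_mul_sq_le (hmK : ∀ᵐ t ∂μ, ‖m t‖ ^ 2 ≤ K) :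
    ∀ᵐ t ∂μ, ‖m t * h t‖ ^ 2 ≤ K * ‖h t‖ ^ 2 :=
  hmK.mono fun t ht => by
    rw [norm_mul, mul_pow]
    exact mul_le_mul_of_nonneg_right ht (sq_nonneg _)

lemma MeasureTheory.MemLp.mul_of_ae_norm_sq_le (hh : MemLp h 2 μ) (hm : AEStronglyMeasurable m μ)
    (hmK : ∀ᵐ t ∂μ, ‖m t‖ ^ 2 ≤ K) : MemLp (fun t => m t * h t) 2 μ := by
  have hmh : AEStronglyMeasurable (fun t => m t * h t) μ := hm.mul hh.1
  refine (memLp_two_iff_integrable_sq_norm hmh).2 <|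
    (((memLp_two_iff_integrable_sq_norm hh.1).1 hh).const_mul K).mono' (hmh.norm.pow 2) <|
      (ae_norm_mul_sq_le (h := h) hmK).mono fun t ht => ?_
  rwa [Real.norm_of_nonneg (by positivity)]

lemma integral_norm_mul_sq_le (hh : MemLp h 2 μ) (hm : AEStronglyMeasurable m μ)
    (hmK : ∀ᵐ t ∂μ, ‖m t‖ ^ 2 ≤ K) :
    ∫ t, ‖m t * h t‖ ^ 2 ∂μ ≤ K * ∫ t, ‖h t‖ ^ 2 ∂μ := by
  rw [← integral_const_mul]
  exact integral_mono_ae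
    ((memLp_two_iff_integrable_sq_norm (hm.mul hh.1)).1 (hh.mul_of_ae_norm_sq_le hm hmK))
    (((memLp_two_iff_integrable_sq_norm hh.1).1 hh).const_mul K) (ae_norm_mul_sq_le hmK)

variable {F : Set X} {x y : X → ℂ}

lemma ae_eq_zero_iff_notMem {a : ℝ} (ha : 0 < a) (hx : ∀ᵐ t ∂μ, t ∈ F → a ≤ ‖x t‖ ^ 2)
    (hxsupp : ∀ᵐ t ∂μ, t ∉ F → x t = 0) : ∀ᵐ t ∂μ, x t = 0 ↔ t ∉ F := by
  filter_upwards [hx, hxsupp] with t hxt hxsuppt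
  refine ⟨fun hx0 htF => ?_, hxsuppt⟩
  have := hxt htF
  rw [hx0, norm_zero] at this
  linarith [zero_pow (M₀ := ℝ) two_ne_zero]

lemma ae_norm_div_sq_le {a b : ℝ} (ha : 0 < a) (hb : 0 ≤ b)
    (hx : ∀ᵐ t ∂μ, t ∈ F → a ≤ ‖x t‖ ^ 2) (hy : ∀ᵐ t ∂μ, t ∈ F → ‖y t‖ ^ 2 ≤ b)
    (hysupp : ∀ᵐ t ∂μ, t ∉ F → y t = 0) : ∀ᵐ t ∂μ, ‖y t / x t‖ ^ 2 ≤ b / a := by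
  filter_upwards [hx, hy, hysupp] with t hxt hyt hysuppt
  by_cases htF : t ∈ F
  · rw [norm_div, div_pow]
    exact div_le_div₀ hb (hyt htF) ha (hxt htF)
  · rw [hysuppt htF, zero_div, norm_zero, zero_pow two_ne_zero]
    positivity

lemma ae_eq_div_mul (hx0 : ∀ᵐ t ∂μ, x t = 0 ↔ t ∉ F) (hy0 : ∀ᵐ t ∂μ, y t = 0 ↔ t ∉ F) :
    ∀ᵐ t ∂μ, y t = y t / x t * x t := by
  filter_upwards [hx0, hy0] with t hxt hyt
  exact (div_mul_cancel_of_imp fun h => hyt.2 (hxt.1 h)).symm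

lemma ae_div_mul_div_mul_cancel (hx0 : ∀ᵐ t ∂μ, x t = 0 ↔ t ∉ F)
    (hy0 : ∀ᵐ t ∂μ, y t = 0 ↔ t ∉ F) (hh : ∀ᵐ t ∂μ, t ∉ F → h t = 0) :
    (fun t => x t / y t * (y t / x t * h t)) =ᵐ[μ] h := by
  filter_upwards [hx0, hy0, hh] with t hxt hyt hht
  by_cases htF : t ∈ F
  · have hx : x t ≠ 0 := mt hxt.1 (not_not_intro htF)
    have hy : y t ≠ 0 := mt hyt.1 (not_not_intro htF)
    field_simp
  · simp [hht htF]

end Multiplier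

section AnalysisRange

variable {G X : Type*} [MeasurableSpace X]

def analysisRange (μ : Measure X) (F : Set X) (χ : G → X → ℂ) (x : X → ℂ) : Set (G → ℂ) :=
  {a | ∃ h : X → ℂ, MemLp h 2 μ ∧ (∀ᵐ t ∂μ, t ∉ F → h t = 0) ∧
    a = fun g => ∫ t, h t * conj (χ g t * x t) ∂μ}

variable {μ : Measure X} {F : Set X} {χ : G → X → ℂ}

lemma analysisRange_subset_of_ae_eq_mul {x y m : X → ℂ} {K : ℝ}
    (hm : AEStronglyMeasurable m μ) (hmK : ∀ᵐ t ∂μ, ‖m t‖ ^ 2 ≤ K)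
    (hyx : ∀ᵐ t ∂μ, y t = m t * x t) : analysisRange μ F χ y ⊆ analysisRange μ F χ x := by
  rintro a ⟨h, hh, hhs, rfl⟩
  refine ⟨fun t => conj (m t) * h t,
    hh.mul_of_ae_norm_sq_le hm.star (by simpa only [RCLike.norm_conj] using hmK),
    hhs.mono fun t ht htF => by simp [ht htF], funext fun g => integral_congr_ae ?_⟩
  filter_upwards [hyx] with t ht
  rw [ht, map_mul, map_mul, map_mul]
  ring

end AnalysisRange

theorem stmt1 {G X : Type*} [DecidableEq G] [MeasurableSpace X]
    (μ : Measure X) [IsProbabilityMeasure μ]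
    (χ : G → X → ℂ)
    (hmeas : ∀ g, Measurable (χ g))
    (hunit : ∀ g x, ‖χ g x‖ = 1)
    (horth : ∀ g g' : G, ∫ x, χ g x * conj (χ g' x) ∂μ = if g = g' then (1 : ℂ) else 0)
    (hcomp : ∀ f : X → ℂ, MemLp f 2 μ →
      (∀ g : G, ∫ x, f x * conj (χ g x) ∂μ = 0) → f =ᵐ[μ] 0)
    (F : Set X) (hF : MeasurableSet F)
    (x y : X → ℂ) (hx : MemLp x 2 μ) (hy : MemLp y 2 μ)
    (hxsupp : ∀ᵐ t ∂μ, t ∉ F → x t = 0) (hysupp : ∀ᵐ t ∂μ, t ∉ F → y t = 0)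
    (hxframe : ∃ C₁ C₂ : ℝ, 0 < C₁ ∧ C₁ ≤ C₂ ∧
      ∀ h : X → ℂ, MemLp h 2 μ → (∀ᵐ t ∂μ, t ∉ F → h t = 0) →
        C₁ * ∫ t, ‖h t‖ ^ 2 ∂μ ≤ ∑' g : G, ‖∫ t, h t * conj (χ g t * x t) ∂μ‖ ^ 2 ∧
        ∑' g : G, ‖∫ t, h t * conj (χ g t * x t) ∂μ‖ ^ 2 ≤ C₂ * ∫ t, ‖h t‖ ^ 2 ∂μ)
    (hyframe : ∃ C₁ C₂ : ℝ, 0 < C₁ ∧ C₁ ≤ C₂ ∧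
      ∀ h : X → ℂ, MemLp h 2 μ → (∀ᵐ t ∂μ, t ∉ F → h t = 0) →
        C₁ * ∫ t, ‖h t‖ ^ 2 ∂μ ≤ ∑' g : G, ‖∫ t, h t * conj (χ g t * y t) ∂μ‖ ^ 2 ∧
        ∑' g : G, ‖∫ t, h t * conj (χ g t * y t) ∂μ‖ ^ 2 ≤ C₂ * ∫ t, ‖h t‖ ^ 2 ∂μ) :
    (∃ S T : (X → ℂ) → (X → ℂ),
      -- S and T map H = L²(F) into itself and are linear
      (∀ h : X → ℂ, MemLp h 2 μ → (∀ᵐ t ∂μ, t ∉ F → h t = 0) →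
        MemLp (S h) 2 μ ∧ (∀ᵐ t ∂μ, t ∉ F → S h t = 0)) ∧
      (∀ h : X → ℂ, MemLp h 2 μ → (∀ᵐ t ∂μ, t ∉ F → h t = 0) →
        MemLp (T h) 2 μ ∧ (∀ᵐ t ∂μ, t ∉ F → T h t = 0)) ∧
      (∀ (c : ℂ) (h₁ h₂ : X → ℂ), MemLp h₁ 2 μ → MemLp h₂ 2 μ →
        (∀ᵐ t ∂μ, t ∉ F → h₁ t = 0) → (∀ᵐ t ∂μ, t ∉ F → h₂ t = 0) →
        S (fun t => c * h₁ t + h₂ t) =ᵐ[μ] fun t => c * S h₁ t + S h₂ t) ∧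
      -- S and T are bounded
      (∃ C : ℝ, 0 < C ∧ ∀ h : X → ℂ, MemLp h 2 μ → (∀ᵐ t ∂μ, t ∉ F → h t = 0) →
        (∫ t, ‖S h t‖ ^ 2 ∂μ) ≤ C * ∫ t, ‖h t‖ ^ 2 ∂μ) ∧
      (∃ C : ℝ, 0 < C ∧ ∀ h : X → ℂ, MemLp h 2 μ → (∀ᵐ t ∂μ, t ∉ F → h t = 0) →
        (∫ t, ‖T h t‖ ^ 2 ∂μ) ≤ C * ∫ t, ‖h t‖ ^ 2 ∂μ) ∧
      -- T is an inverse of S, so S is invertible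
      (∀ h : X → ℂ, MemLp h 2 μ → (∀ᵐ t ∂μ, t ∉ F → h t = 0) →
        T (S h) =ᵐ[μ] h ∧ S (T h) =ᵐ[μ] h) ∧
      -- S commutes with every π(g)
      (∀ (g : G) (h : X → ℂ), MemLp h 2 μ → (∀ᵐ t ∂μ, t ∉ F → h t = 0) →
        S (fun t => χ g t * h t) =ᵐ[μ] fun t => χ g t * S h t) ∧
      -- S carries the frame {π(g)x} to the frame {π(g)y}
      (∀ g : G, S (fun t => χ g t * x t) =ᵐ[μ] fun t => χ g t * y t))
    ∧
    {a : G → ℂ | ∃ h : X → ℂ, MemLp h 2 μ ∧ (∀ᵐ t ∂μ, t ∉ F → h t = 0) ∧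
        a = fun g => ∫ t, h t * conj (χ g t * x t) ∂μ} =
      {a : G → ℂ | ∃ h : X → ℂ, MemLp h 2 μ ∧ (∀ᵐ t ∂μ, t ∉ F → h t = 0) ∧
        a = fun g => ∫ t, h t * conj (χ g t * y t) ∂μ} := by
  obtain ⟨A₁, A₂, hA₁, hA₁₂, hxf⟩ := hxframe
  obtain ⟨B₁, B₂, hB₁, hB₁₂, hyf⟩ := hyframe
  have hP : HasParseval μ χ := hasParseval_of_orthonormal_of_complete (fun g =>
    MemLp.of_bound (hmeas g).aestronglyMeasurable 1 (ae_of_all _ fun t => (hunit g t).le))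
    horth hcomp
  obtain ⟨hxlo, hxhi⟩ := hP.ae_bounds_of_frame hF hx hxf
  obtain ⟨hylo, hyhi⟩ := hP.ae_bounds_of_frame hF hy hyf
  have hx0 := ae_eq_zero_iff_notMem hA₁ hxlo hxsupp
  have hy0 := ae_eq_zero_iff_notMem hB₁ hylo hysupp
  have hS := ae_norm_div_sq_le hA₁ (hB₁.trans_le hB₁₂).le hxlo hyhi hysupp
  have hT := ae_norm_div_sq_le hB₁ (hA₁.trans_le hA₁₂).le hylo hxhi hxsupp
  have hSm := (hy.1.aemeasurable.div hx.1.aemeasurable).aestronglyMeasurable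
  have hTm := (hx.1.aemeasurable.div hy.1.aemeasurable).aestronglyMeasurable
  have hyx := ae_eq_div_mul hx0 hy0
  refine ⟨⟨fun h t => y t / x t * h t, fun h t => x t / y t * h t,
    fun h hh hhs => ⟨hh.mul_of_ae_norm_sq_le hSm hS, hhs.mono fun t ht htF => by simp [ht htF]⟩,
    fun h hh hhs => ⟨hh.mul_of_ae_norm_sq_le hTm hT, hhs.mono fun t ht htF => by simp [ht htF]⟩,
    fun c h₁ h₂ _ _ _ _ => ae_of_all _ fun t => by ring,
    ⟨B₂ / A₁, div_pos (hB₁.trans_le hB₁₂) hA₁, fun h hh _ => integral_norm_mul_sq_le hh hSm hS⟩,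
    ⟨A₂ / B₁, div_pos (hA₁.trans_le hA₁₂) hB₁, fun h hh _ => integral_norm_mul_sq_le hh hTm hT⟩,
    fun h _ hhs => ⟨ae_div_mul_div_mul_cancel hx0 hy0 hhs, ae_div_mul_div_mul_cancel hy0 hx0 hhs⟩,
    fun g h _ _ => ae_of_all _ fun t => by ring,
    fun g => hyx.mono fun t ht => by linear_combination (-χ g t) * ht⟩,
    (analysisRange_subset_of_ae_eq_mul hTm hT (ae_eq_div_mul hy0 hx0)).antisymm
      (analysisRange_subset_of_ae_eq_mul hSm hS hyx)⟩
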